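/- arXiv:2402.08851 — 7 statements merged into one kernel-verified Lean document; each statement's English description precedes it below -/
import Mathlib

section
/- A fractional perfect matching x* on a bipartite set of n agents and n goods with linear utilities u is Pareto-optimal if and only if there exist strictly positive weights (α_i) such that x* maximizes Σ_i α_i (u_i · x_i) over the polytope of all fractional perfect matchings. -/
open Finset

section Helpers

/-- dot product -/
def dott {n : ℕ} (a b : Fin n → ℝ) : ℝ := ∑ i, a i * b i

lemma dott_self_pos {n : ℕ} {a : Fin n → ℝ} (h : a ≠ 0) : 0 < dott a a := by
  have h2 : ∃ i, a i ≠ 0 := by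
    by_contra hc
    push_neg at hc
    exact h (funext fun i => hc i)
  obtain ⟨i, hi⟩ := h2
  exact Finset.sum_pos' (fun j _ => mul_self_nonneg _) ⟨i, mem_univ i, mul_self_pos.2 hi⟩

lemma dott_smul_sub_left {n : ℕ} (c t : ℝ) (a b v : Fin n → ℝ) :
    dott (c • a - t • b) v = c * dott a v - t * dott b v := by
  simp [dott, sub_mul, mul_sum, Finset.sum_sub_distrib, mul_assoc]

lemma dott_smul_sub_right {n : ℕ} (c t : ℝ) (a b v : Fin n → ℝ) :
    dott v (c • a - t • b) = c * dott v a - t * dott v b := by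
  calc dott v (c • a - t • b) = ∑ i, (c * (v i * a i) - t * (v i * b i)) :=
        Finset.sum_congr rfl fun i _ => by simp; ring
    _ = c * dott v a - t * dott v b := by
        rw [Finset.sum_sub_distrib, ← mul_sum, ← mul_sum]; rfl

lemma dott_single {n : ℕ} (a : Fin n → ℝ) (j : Fin n) : dott a (Pi.single j 1) = a j := by
  simp [dott, Pi.single_apply, Finset.sum_ite_eq]

lemma dott_neg {n : ℕ} (a b : Fin n → ℝ) : dott a (-b) = - dott a b := by
  simp [dott, Finset.sum_neg_distrib]

/-- Farkas' lemma for finitely generated cones, by induction on the generators. -/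
lemma farkas {n : ℕ} {ι : Type*} [DecidableEq ι] (S : Finset ι) :
    ∀ (g : ι → (Fin n → ℝ)) (b : Fin n → ℝ),
    (¬ ∃ μ : ι → ℝ, (∀ k, 0 ≤ μ k) ∧ ∑ k ∈ S, μ k • g k = b) →
    ∃ α : Fin n → ℝ, (∀ k ∈ S, dott α (g k) ≤ 0) ∧ 0 < dott α b := by
  induction S using Finset.induction_on with
  | empty =>
    intro g b h
    have hb : b ≠ 0 := by
      rintro rfl
      exact h ⟨0, fun k => le_refl 0, by simp⟩
    exact ⟨b, by simp, dott_self_pos hb⟩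
  | @insert a S' ha ih =>
    intro g b h
    have h' : ¬ ∃ μ : ι → ℝ, (∀ k, 0 ≤ μ k) ∧ ∑ k ∈ S', μ k • g k = b := by
      rintro ⟨μ, hμ, hsum⟩
      refine h ⟨fun k => if k = a then 0 else μ k, fun k => ?_, ?_⟩
      · dsimp only; split
        · exact le_refl 0
        · exact hμ k
      · rw [Finset.sum_insert ha]
        simp only [eq_self_iff_true, if_true, zero_smul, zero_add]
        rw [← hsum]
        exact Finset.sum_congr rfl fun k hk => by
          rw [if_neg (fun heq : k = a => ha (heq ▸ hk))]
    obtain ⟨α, hα, hαb⟩ := ih g b h'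
    by_cases hga : dott α (g a) ≤ 0
    · refine ⟨α, fun k hk => ?_, hαb⟩
      rcases Finset.mem_insert.1 hk with rfl | hk
      · exact hga
      · exact hα k hk
    push_neg at hga
    set c : ℝ := dott α (g a) with hc
    set g' : ι → (Fin n → ℝ) := fun k => c • g k - (dott α (g k)) • g a with hg'
    set b' : Fin n → ℝ := c • b - (dott α b) • g a with hb'
    have hc0 : c ≠ 0 := ne_of_gt hga
    have h'' : ¬ ∃ μ : ι → ℝ, (∀ k, 0 ≤ μ k) ∧ ∑ k ∈ S', μ k • g' k = b' := by
      rintro ⟨μ, hμ, hsum⟩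
      obtain ⟨t, ht⟩ : ∃ t : ℝ, t = (dott α b - ∑ k ∈ S', μ k * dott α (g k)) / c :=
        ⟨_, rfl⟩
      have htpos : 0 ≤ t := by
        rw [ht]
        apply div_nonneg _ hga.le
        have : ∑ k ∈ S', μ k * dott α (g k) ≤ 0 :=
          Finset.sum_nonpos fun k hk => mul_nonpos_of_nonneg_of_nonpos (hμ k) (hα k hk)
        linarith
      have hct : c * t = dott α b - ∑ k ∈ S', μ k * dott α (g k) := by
        rw [ht]; field_simp
      have hexp : ∑ k ∈ S', μ k • g' k
          = c • (∑ k ∈ S', μ k • g k) - (∑ k ∈ S', μ k * dott α (g k)) • g a := by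
        have hterm : ∀ k ∈ S', μ k • g' k
            = c • (μ k • g k) - (μ k * dott α (g k)) • g a := by
          intro k _
          simp only [hg']
          rw [smul_sub, smul_smul, smul_smul, smul_smul, mul_comm (μ k) c]
        rw [Finset.sum_congr rfl hterm, Finset.sum_sub_distrib, ← Finset.smul_sum,
          ← Finset.sum_smul]
      rw [hexp, hb'] at hsum
      have hkey : ∑ k ∈ S', μ k • g k = b - t • g a := by
        have h2 : c • (b - t • g a) = c • b - (c * t) • g a := by module
        refine smul_right_injective (Fin n → ℝ) hc0 ?_
        show c • (∑ k ∈ S', μ k • g k) = c • (b - t • g a)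
        rw [h2, hct, sub_smul]
        linear_combination (norm := module) hsum
      refine h ⟨fun k => if k = a then t else if k ∈ S' then μ k else 0, fun k => ?_, ?_⟩
      · dsimp only; split
        · exact htpos
        · split
          · exact hμ k
          · exact le_refl 0
      · rw [Finset.sum_insert ha]
        simp only [eq_self_iff_true, if_true]
        have hre : ∑ k ∈ S', (if k = a then t else if k ∈ S' then μ k else 0) • g k
            = ∑ k ∈ S', μ k • g k := by
          refine Finset.sum_congr rfl fun k hk => ?_
          rw [if_neg (fun heq : k = a => ha (heq ▸ hk)), if_pos hk]
        rw [hre, hkey]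
        module
    obtain ⟨β, hβ, hβb⟩ := ih g' b' h''
    refine ⟨c • β - (dott β (g a)) • α, fun k hk => ?_, ?_⟩
    · rcases Finset.mem_insert.1 hk with rfl | hk
      · rw [dott_smul_sub_left, ← hc]
        ring_nf
        try exact le_refl 0
      · rw [dott_smul_sub_left]
        have h3 := hβ k hk
        simp only [hg'] at h3
        rw [dott_smul_sub_right] at h3
        linarith
    · rw [dott_smul_sub_left]
      have h3 := hβb
      rw [hb', dott_smul_sub_right] at h3
      linarith

end Helpers

/-- A fractional perfect matching. -/
def isPM {n : ℕ} (x : Fin n → Fin n → ℝ) : Prop :=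
  (∀ i j, 0 ≤ x i j) ∧ (∀ i, ∑ j, x i j = 1) ∧ (∀ j, ∑ i, x i j = 1)

/-- The (linear) utility of agent `i` under allocation `x`. -/
def util {n : ℕ} (u x : Fin n → Fin n → ℝ) (i : Fin n) : ℝ := ∑ j, u i j * x i j

/-- Pareto-optimality over the polytope of fractional perfect matchings. -/
def ParetoOptimal {n : ℕ} (u x : Fin n → Fin n → ℝ) : Prop :=
  ¬ ∃ y, isPM y ∧ (∀ i, util u x i ≤ util u y i) ∧ (∃ i, util u x i < util u y i)

section Birkhoff

lemma perm_entry {n : ℕ} (σ : Equiv.Perm (Fin n)) (i j : Fin n) :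
    σ.permMatrix ℝ i j = if σ i = j then 1 else 0 := by
  simp [Equiv.Perm.permMatrix, PEquiv.toMatrix_apply, Equiv.toPEquiv_apply]

lemma decomp {n : ℕ} (u x : Fin n → Fin n → ℝ) (hx : isPM x) :
    ∃ w : Equiv.Perm (Fin n) → ℝ, (∀ σ, 0 ≤ w σ) ∧ (∑ σ, w σ = 1) ∧
      ∀ i, util u x i = ∑ σ, w σ * u i (σ i) := by
  obtain ⟨h1, h2, h3⟩ := hx
  have hM : (Matrix.of x) ∈ doublyStochastic ℝ (Fin n) := by
    rw [mem_doublyStochastic_iff_sum]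
    exact ⟨h1, h2, h3⟩
  obtain ⟨w, hw0, hw1, hw2⟩ := exists_eq_sum_perm_of_mem_doublyStochastic hM
  refine ⟨w, hw0, hw1, fun i => ?_⟩
  have hentry : ∀ j, x i j = ∑ σ : Equiv.Perm (Fin n), w σ * (if σ i = j then 1 else 0) := by
    intro j
    have := congrFun (congrFun hw2 i) j
    rw [Matrix.sum_apply, Matrix.of_apply] at this
    rw [← this]
    exact Finset.sum_congr rfl fun σ _ => by
      rw [Matrix.smul_apply, perm_entry, smul_eq_mul]
  calc util u x i = ∑ j, u i j * ∑ σ : Equiv.Perm (Fin n), w σ * (if σ i = j then 1 else 0) := by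
        unfold util
        exact Finset.sum_congr rfl fun j _ => by rw [hentry j]
    _ = ∑ σ : Equiv.Perm (Fin n), ∑ j, u i j * (w σ * (if σ i = j then 1 else 0)) := by
        rw [Finset.sum_comm]
        exact Finset.sum_congr rfl fun j _ => by rw [Finset.mul_sum]
    _ = ∑ σ : Equiv.Perm (Fin n), w σ * u i (σ i) := by
        refine Finset.sum_congr rfl fun σ _ => ?_
        simp [mul_ite, Finset.sum_ite_eq, mul_comm]

end Birkhoff

/-- a fractional perfect matching is Pareto-optimal iff it maximizes a
strictly positively weighted sum of utilities over all fractional perfect matchings. -/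
theorem pareto_characterization {n : ℕ} (u : Fin n → Fin n → ℝ)
    (hu : ∀ i j, 0 ≤ u i j) (xstar : Fin n → Fin n → ℝ) (hx : isPM xstar) :
    ParetoOptimal u xstar ↔
      ∃ α : Fin n → ℝ, (∀ i, 0 < α i) ∧
        ∀ x, isPM x → ∑ i, α i * util u x i ≤ ∑ i, α i * util u xstar i := by
  constructor
  · intro hPO
    rcases Nat.eq_zero_or_pos n with hn | hn
    · subst hn
      exact ⟨fun _ => 1, fun i => one_pos, fun x hxpm => by simp⟩
    have key : ∀ i0 : Fin n, ∃ α : Fin n → ℝ, (∀ j, 0 ≤ α j) ∧ 0 < α i0 ∧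
        ∀ σ : Equiv.Perm (Fin n), ∑ i, α i * (u i (σ i) - util u xstar i) ≤ 0 := by
      intro i0
      have hprem : ¬ ∃ μ : (Equiv.Perm (Fin n)) ⊕ (Fin n) → ℝ, (∀ k, 0 ≤ μ k) ∧
          ∑ k ∈ Finset.univ, μ k •
            (Sum.elim (fun σ => fun i => u i (σ i) - util u xstar i)
              (fun j => -(Pi.single j 1)) k) = Pi.single i0 1 := by
        rintro ⟨μ, hμ, hsum⟩
        set A : Fin n → ℝ :=
          fun i => ∑ σ : Equiv.Perm (Fin n), μ (Sum.inl σ) * (u i (σ i) - util u xstar i)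
          with hA
        have hco : ∀ i, A i = μ (Sum.inr i) + (if i = i0 then 1 else 0) := by
          intro i
          have h0 := congrFun hsum i
          rw [Fintype.sum_sum_type] at h0
          simp only [Pi.add_apply, Finset.sum_apply, Pi.smul_apply, smul_eq_mul,
            Sum.elim_inl, Sum.elim_inr, Pi.neg_apply, Pi.single_apply, mul_neg,
            Finset.sum_neg_distrib, mul_ite, mul_one, mul_zero, Finset.sum_ite_eq] at h0
          simp only [hA, mem_univ, if_true] at h0 ⊢
          linarith [h0]
        have hAnn : ∀ i, 0 ≤ A i := by
          intro i
          rw [hco]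
          have := hμ (Sum.inr i)
          split <;> linarith
        have hAi0 : 1 ≤ A i0 := by
          rw [hco]
          simp only [eq_self_iff_true, if_true]
          linarith [hμ (Sum.inr i0)]
        set s : ℝ := ∑ σ : Equiv.Perm (Fin n), μ (Sum.inl σ) with hs
        have hs0 : 0 ≤ s := Finset.sum_nonneg fun σ _ => hμ _
        have hspos : 0 < s := by
          rcases eq_or_lt_of_le hs0 with heq | h
          · exfalso
            have hall : ∀ σ ∈ Finset.univ, μ (Sum.inl (σ : Equiv.Perm (Fin n))) = 0 :=
              (Finset.sum_eq_zero_iff_of_nonneg (fun σ _ => hμ _)).1 heq.symm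
            have : A i0 = 0 := by
              rw [hA]
              exact Finset.sum_eq_zero fun σ _ => by rw [hall σ (mem_univ _), zero_mul]
            linarith
          · exact h
        set y : Fin n → Fin n → ℝ :=
          fun i j => s⁻¹ * ∑ σ : Equiv.Perm (Fin n), μ (Sum.inl σ) * (if σ i = j then 1 else 0)
          with hy
        have hyPM : isPM y := by
          refine ⟨fun i j => ?_, fun i => ?_, fun j => ?_⟩
          · apply mul_nonneg (inv_nonneg.2 hs0)
            refine Finset.sum_nonneg fun σ _ => mul_nonneg (hμ _) ?_
            split <;> norm_num
          · rw [← Finset.mul_sum, Finset.sum_comm]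
            have : ∀ σ ∈ (Finset.univ : Finset (Equiv.Perm (Fin n))),
                ∑ j, μ (Sum.inl σ) * (if σ i = j then 1 else 0) = μ (Sum.inl σ) := by
              intro σ _
              simp [mul_ite, Finset.sum_ite_eq]
            rw [Finset.sum_congr rfl this, ← hs, inv_mul_cancel₀ (ne_of_gt hspos)]
          · rw [← Finset.mul_sum, Finset.sum_comm]
            have : ∀ σ ∈ (Finset.univ : Finset (Equiv.Perm (Fin n))),
                ∑ i, μ (Sum.inl σ) * (if σ i = j then 1 else 0) = μ (Sum.inl σ) := by
              intro σ _
              have : ∀ i : Fin n, (if σ i = j then (1:ℝ) else 0)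
                  = if i = σ.symm j then 1 else 0 := by
                intro i
                congr 1
                simp [Equiv.apply_eq_iff_eq_symm_apply]
              simp only [mul_ite, mul_one, mul_zero, this]
              simp [Finset.sum_ite_eq']
            rw [Finset.sum_congr rfl this, ← hs, inv_mul_cancel₀ (ne_of_gt hspos)]
        have hutil : ∀ i, util u y i = util u xstar i + s⁻¹ * A i := by
          intro i
          have h1 : util u y i
              = s⁻¹ * ∑ σ : Equiv.Perm (Fin n), μ (Sum.inl σ) * u i (σ i) := by
            unfold util
            rw [hy]
            calc ∑ j, u i j * (s⁻¹ * ∑ σ : Equiv.Perm (Fin n),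
                    μ (Sum.inl σ) * (if σ i = j then 1 else 0))
                = s⁻¹ * ∑ j, ∑ σ : Equiv.Perm (Fin n),
                    μ (Sum.inl σ) * ((if σ i = j then 1 else 0) * u i j) := by
                  rw [Finset.mul_sum]
                  refine Finset.sum_congr rfl fun j _ => ?_
                  rw [Finset.mul_sum, Finset.mul_sum, Finset.mul_sum]
                  exact Finset.sum_congr rfl fun σ _ => by ring
              _ = s⁻¹ * ∑ σ : Equiv.Perm (Fin n), μ (Sum.inl σ) * u i (σ i) := by
                  rw [Finset.sum_comm]
                  congr 1
                  exact Finset.sum_congr rfl fun σ _ => by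
                    simp [mul_ite, ite_mul, Finset.sum_ite_eq]
          have h2 : ∑ σ : Equiv.Perm (Fin n), μ (Sum.inl σ) * u i (σ i)
              = A i + s * util u xstar i := by
            rw [hA, hs]
            rw [Finset.sum_mul, ← Finset.sum_add_distrib]
            exact Finset.sum_congr rfl fun σ _ => by ring
          rw [h1, h2, mul_add, ← mul_assoc, inv_mul_cancel₀ (ne_of_gt hspos), one_mul]
          ring
        refine hPO ⟨y, hyPM, fun i => ?_, ⟨i0, ?_⟩⟩
        · rw [hutil]
          have := hAnn i
          have : 0 ≤ s⁻¹ * A i := mul_nonneg (inv_nonneg.2 hs0) this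
          linarith
        · rw [hutil]
          have : 0 < s⁻¹ * A i0 :=
            mul_pos (inv_pos.2 hspos) (lt_of_lt_of_le one_pos hAi0)
          linarith
      obtain ⟨α, hα1, hα2⟩ := farkas (Finset.univ : Finset ((Equiv.Perm (Fin n)) ⊕ (Fin n)))
        (Sum.elim (fun σ => fun i => u i (σ i) - util u xstar i) (fun j => -(Pi.single j 1)))
        (Pi.single i0 1) hprem
      refine ⟨α, fun j => ?_, ?_, fun σ => ?_⟩
      · have := hα1 (Sum.inr j) (mem_univ _)
        rw [Sum.elim_inr, dott_neg, dott_single] at this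
        linarith
      · have := hα2
        rwa [dott_single] at this
      · have := hα1 (Sum.inl σ) (mem_univ _)
        rw [Sum.elim_inl] at this
        exact this
    choose A hA0 hApos hAσ using key
    refine ⟨fun i => ∑ i0, A i0 i, fun i => ?_, ?_⟩
    · exact Finset.sum_pos' (fun i0 _ => hA0 i0 i) ⟨i, mem_univ i, hApos i⟩
    intro x hxpm
    obtain ⟨w, hw0, hw1, hw2⟩ := decomp u x hxpm
    have hdom : ∀ σ : Equiv.Perm (Fin n),
        ∑ i, (∑ i0, A i0 i) * u i (σ i) ≤ ∑ i, (∑ i0, A i0 i) * util u xstar i := by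
      intro σ
      have hsw : ∑ i, (∑ i0, A i0 i) * (u i (σ i) - util u xstar i) ≤ 0 := by
        have : ∑ i, (∑ i0, A i0 i) * (u i (σ i) - util u xstar i)
            = ∑ i0, ∑ i, A i0 i * (u i (σ i) - util u xstar i) := by
          rw [Finset.sum_comm]
          exact Finset.sum_congr rfl fun i _ => by rw [Finset.sum_mul]
        rw [this]
        exact Finset.sum_nonpos fun i0 _ => hAσ i0 σ
      have hexpand : ∑ i, (∑ i0, A i0 i) * (u i (σ i) - util u xstar i)
          = ∑ i, (∑ i0, A i0 i) * u i (σ i) - ∑ i, (∑ i0, A i0 i) * util u xstar i := by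
        rw [← Finset.sum_sub_distrib]
        exact Finset.sum_congr rfl fun i _ => by ring
      linarith [hexpand ▸ hsw]
    calc ∑ i, (∑ i0, A i0 i) * util u x i
        = ∑ i, ∑ σ : Equiv.Perm (Fin n), (∑ i0, A i0 i) * (w σ * u i (σ i)) := by
          refine Finset.sum_congr rfl fun i _ => ?_
          rw [hw2 i, Finset.mul_sum]
      _ = ∑ σ : Equiv.Perm (Fin n), w σ * ∑ i, (∑ i0, A i0 i) * u i (σ i) := by
          rw [Finset.sum_comm]
          refine Finset.sum_congr rfl fun σ _ => ?_
          rw [Finset.mul_sum]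
          refine Finset.sum_congr rfl fun i _ => by ring
      _ ≤ ∑ σ : Equiv.Perm (Fin n), w σ * ∑ i, (∑ i0, A i0 i) * util u xstar i := by
          exact Finset.sum_le_sum fun σ _ =>
            mul_le_mul_of_nonneg_left (hdom σ) (hw0 σ)
      _ = ∑ i, (∑ i0, A i0 i) * util u xstar i := by
          rw [← Finset.sum_mul, hw1, one_mul]
  · rintro ⟨α, hαpos, hmax⟩ ⟨y, hy, hge, i1, hgt⟩
    have hlt : ∑ i, α i * util u xstar i < ∑ i, α i * util u y i :=
      Finset.sum_lt_sum (fun i _ => mul_le_mul_of_nonneg_left (hge i) (hαpos i).le)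
        ⟨i1, mem_univ _, mul_lt_mul_of_pos_left hgt (hαpos i1)⟩
    linarith [hmax y hy]
end

section
/- If an envy-free and Pareto-optimal fractional perfect matching exists, then there exists one that is a vertex of the envy-free polytope P_EF; in particular, with rational utilities there always exists a rational envy-free Pareto-optimal allocation. -/
/-!
By Birkhoff–von Neumann, the utility gains over `x₀` achievable by fractional perfect matchings
are convex combinations of the gains of permutation matrices, so Pareto optimality of `x₀` says
that a finitely generated cone meets the nonnegative orthant only at `0`. Finitely generated
cones are closed (Carathéodory), so this cone can be separated from the standard simplex, which
yields strictly positive weights `α` for which `x₀` maximises the `α`-weighted welfare over all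
fractional perfect matchings. Some vertex of the compact polytope `P_EF` maximises this welfare on
`P_EF`, hence over all matchings, and is therefore Pareto optimal. Finally, `P_EF` is cut out by
finitely many rational inequalities; a `ℚ`-linear retraction `ℝ → ℚ` applied entrywise to a
vertex preserves its tight constraints, which determine the vertex, so the vertex is rational.
-/

open Finset

/-- Envy-freeness: no agent prefers another agent's bundle. -/
def EnvyFree {n : ℕ} (u x : Fin n → Fin n → ℝ) : Prop :=
  ∀ i i' : Fin n, ∑ j, u i j * x i' j ≤ ∑ j, u i j * x i j

/-- The envy-free polytope `P_EF` of envy-free fractional perfect matchings. -/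
def PEF {n : ℕ} (u : Fin n → Fin n → ℝ) : Set (Fin n → Fin n → ℝ) :=
  {x | isPM x ∧ EnvyFree u x}

section Caratheodory

variable {κ E : Type*} [DecidableEq κ] [AddCommGroup E] [Module ℝ E]

theorem exists_erase_sum_eq_of_not_linearIndepOn {g : κ → E} {s : Finset κ} {c : κ → ℝ}
    (hc : ∀ k ∈ s, 0 ≤ c k) (hs : ¬LinearIndepOn ℝ g s) :
    ∃ k₀ ∈ s, ∃ c' : κ → ℝ, (∀ k ∈ s, 0 ≤ c' k) ∧
      ∑ k ∈ s.erase k₀, c' k • g k = ∑ k ∈ s, c k • g k := by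
  obtain ⟨d, hd, k₁, hk₁, hdk₁⟩ := not_linearIndepOn_finset_iff.1 hs
  wlog hpos : 0 < d k₁ generalizing d
  · exact this (-d) (by simp [neg_smul, hd]) (neg_ne_zero.2 hdk₁)
      (neg_pos.2 (lt_of_le_of_ne (not_lt.1 hpos) hdk₁))
  -- move along the relation `d` until the first coefficient vanishes
  obtain ⟨k₀, hk₀, hmin⟩ := (s.filter (0 < d ·)).exists_min_image (fun k => c k / d k)
    ⟨k₁, mem_filter.2 ⟨hk₁, hpos⟩⟩
  rw [mem_filter] at hk₀
  have ht : 0 ≤ c k₀ / d k₀ := div_nonneg (hc k₀ hk₀.1) hk₀.2.le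
  refine ⟨k₀, hk₀.1, fun k => c k - c k₀ / d k₀ * d k, fun k hk => ?_, ?_⟩
  · rcases lt_or_ge 0 (d k) with hdk | hdk
    · have := hmin k (mem_filter.2 ⟨hk, hdk⟩)
      rw [le_div_iff₀ hdk] at this
      linarith
    · nlinarith [hc k hk]
  · rw [sum_erase _ (by simp only [div_mul_cancel₀ _ hk₀.2.ne', sub_self, zero_smul])]
    simp only [sub_smul, mul_smul, sum_sub_distrib, ← smul_sum, hd, smul_zero, sub_zero]

/-- Carathéodory's theorem for cones. -/
theorem exists_linearIndepOn_sum_eq (g : κ → E) (s : Finset κ) (c : κ → ℝ)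
    (hc : ∀ k ∈ s, 0 ≤ c k) :
    ∃ t : Finset κ, LinearIndepOn ℝ g t ∧
      ∃ c' : κ → ℝ, (∀ k ∈ t, 0 ≤ c' k) ∧ ∑ k ∈ t, c' k • g k = ∑ k ∈ s, c k • g k := by
  induction s using Finset.strongInduction generalizing c with
  | H s ih =>
    by_cases hs : LinearIndepOn ℝ g s
    · exact ⟨s, hs, c, hc, rfl⟩
    obtain ⟨k₀, hk₀, c', hc', hsum⟩ := exists_erase_sum_eq_of_not_linearIndepOn hc hs
    obtain ⟨t, ht, c'', hc'', hsum'⟩ :=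
      ih _ (erase_ssubset hk₀) c' fun k hk => hc' k (mem_of_mem_erase hk)
    exact ⟨t, ht, c'', hc'', hsum'.trans hsum⟩

end Caratheodory

section Cone

variable {κ E : Type*} [Fintype κ] [AddCommGroup E] [Module ℝ E]

def coneGen (g : κ → E) : PointedCone ℝ E :=
  (PointedCone.positive ℝ (κ → ℝ)).map (Fintype.linearCombination ℝ g)

theorem mem_coneGen {g : κ → E} {x : E} :
    x ∈ coneGen g ↔ ∃ c : κ → ℝ, 0 ≤ c ∧ ∑ k, c k • g k = x := by
  simp [coneGen, PointedCone.mem_map, PointedCone.mem_positive, Fintype.linearCombination_apply]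

theorem mem_coneGen_self (g : κ → E) (k : κ) : g k ∈ coneGen g := by
  classical
  exact mem_coneGen.2 ⟨Pi.single k 1, by simp [Pi.single_nonneg], by simp [Pi.single_apply]⟩

theorem coneGen_comp_le {κ' : Type*} [Fintype κ'] (g : κ → E) (f : κ' → κ) :
    coneGen (g ∘ f) ≤ coneGen g := by
  intro x hx
  obtain ⟨c, hc, rfl⟩ := mem_coneGen.1 hx
  exact sum_mem fun k _ => (coneGen g).smul_mem (hc k) (mem_coneGen_self g (f k))

variable [TopologicalSpace E] [IsTopologicalAddGroup E] [ContinuousSMul ℝ E] [T2Space E]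

theorem isClosed_coneGen_of_linearIndependent {g : κ → E} (hg : LinearIndependent ℝ g) :
    IsClosed (coneGen g : Set E) := by
  rw [coneGen, PointedCone.coe_map]
  refine (LinearMap.isClosedEmbedding_of_injective (LinearMap.ker_eq_bot.2 ?_)).isClosedMap _
    (isClosed_le continuous_const continuous_id)
  exact linearIndependent_iff_injective_fintypeLinearCombination.1 hg

theorem isClosed_coneGen (g : κ → E) : IsClosed (coneGen g : Set E) := by
  classical
  have : (coneGen g : Set E) =
      ⋃ (t : Finset κ) (_ : LinearIndepOn ℝ g t), coneGen (fun k : t => g k) := by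
    refine subset_antisymm (fun x hx => ?_) (Set.iUnion₂_subset fun t _ => coneGen_comp_le g _)
    obtain ⟨c, hc, rfl⟩ := mem_coneGen.1 hx
    obtain ⟨t, ht, c', hc', hsum⟩ := exists_linearIndepOn_sum_eq g univ c fun k _ => hc k
    refine Set.mem_iUnion₂.2 ⟨t, ht, mem_coneGen.2 ⟨fun k => c' k, fun k => hc' k k.2, ?_⟩⟩
    rw [sum_coe_sort t fun k => c' k • g k, hsum]
  rw [this]
  exact isClosed_iUnion_of_finite fun t =>
    isClosed_iUnion_of_finite fun ht => isClosed_coneGen_of_linearIndependent ht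

end Cone

/-- Stiemke's transposition theorem. -/
theorem exists_pos_dotProduct_nonpos {ι κ : Type*} [Fintype ι] [Fintype κ] (v : κ → ι → ℝ)
    (hv : ∀ y ∈ coneGen v, 0 ≤ y → y = 0) :
    ∃ α : ι → ℝ, (∀ i, 0 < α i) ∧ ∀ k, α ⬝ᵥ v k ≤ 0 := by
  classical
  have hdisj : Disjoint (stdSimplex ℝ ι) (coneGen v : Set (ι → ℝ)) := by
    refine Set.disjoint_left.2 fun y hyΔ hyC => ?_
    obtain rfl := hv y hyC hyΔ.1
    simpa using hyΔ.2
  obtain ⟨f, hfC, hfΔ⟩ := ProperCone.hyperplane_separation ⟨coneGen v, isClosed_coneGen v⟩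
    (convex_stdSimplex ℝ ι) (isCompact_stdSimplex ℝ ι) hdisj
  refine ⟨fun i => -f (if i = · then 1 else 0),
    fun i => neg_pos.2 (hfΔ _ (ite_eq_mem_stdSimplex ℝ i)), fun k => ?_⟩
  have hf := LinearMap.pi_apply_eq_sum_univ f.toLinearMap (v k)
  have hfk : 0 ≤ f (v k) := hfC _ (mem_coneGen_self v k)
  simp only [ContinuousLinearMap.coe_coe, smul_eq_mul] at hf
  simp only [dotProduct, neg_mul, sum_neg_distrib, neg_nonpos]
  simpa [hf, mul_comm] using hfk

section Polyhedron

open Filter Topology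

variable {E κ : Type*} [AddCommGroup E] [Module ℝ E]

def polyhedron (a : κ → E →ₗ[ℝ] ℝ) (b : κ → ℝ) (T : Finset κ) : Set E :=
  {x | ∀ c ∈ T, b c ≤ a c x}

theorem eq_zero_of_mem_extremePoints_polyhedron {a : κ → E →ₗ[ℝ] ℝ} {b : κ → ℝ} {T : Finset κ}
    {x d : E} (hx : x ∈ (polyhedron a b T).extremePoints ℝ)
    (hd : ∀ c ∈ T, a c x = b c → a c d = 0) : d = 0 := by
  have hev : ∀ᶠ t : ℝ in 𝓝 0, x + t • d ∈ polyhedron a b T := by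
    refine (eventually_all_finset T).2 fun c hc => ?_
    simp only [map_add, map_smul, smul_eq_mul]
    rcases (hx.1 c hc).eq_or_lt with h | h
    · exact Eventually.of_forall fun t => by rw [hd c hc h.symm, mul_zero, add_zero, h]
    · have : Tendsto (fun t : ℝ => a c x + t * a c d) (𝓝 0) (𝓝 (a c x)) :=
        (continuous_const.add (continuous_id.mul continuous_const)).tendsto' _ _ (by simp)
      exact (this.eventually_const_lt h).mono fun t ht => ht.le
  obtain ⟨ε, hε, hball⟩ := Metric.eventually_nhds_iff.1 hev
  have h₁ := hball (show dist (ε / 2) 0 < ε by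
    rw [Real.dist_0_eq_abs, abs_of_pos (by positivity)]; linarith)
  have h₂ := hball (show dist (-(ε / 2)) 0 < ε by
    rw [Real.dist_0_eq_abs, abs_neg, abs_of_pos (by positivity)]; linarith)
  have hseg : x ∈ openSegment ℝ (x + (ε / 2) • d) (x + (-(ε / 2)) • d) :=
    ⟨1 / 2, 1 / 2, by norm_num, by norm_num, by norm_num, by module⟩
  have := ((mem_extremePoints.1 hx).2 _ h₁ _ h₂ hseg).1
  rw [add_eq_left, smul_eq_zero] at this
  exact this.resolve_left (by positivity)

end Polyhedron

section Rational

variable {m ν : Type*} [Fintype m] [Fintype ν]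

def frobeniusPairing (L : m → ν → ℝ) : (m → ν → ℝ) →ₗ[ℝ] ℝ where
  toFun x := ∑ i, ∑ j, L i j * x i j
  map_add' x y := by simp only [Pi.add_apply, mul_add, sum_add_distrib]
  map_smul' r x := by
    simp only [Pi.smul_apply, smul_eq_mul, mul_sum, RingHom.id_apply, mul_left_comm]

theorem frobeniusPairing_apply (L x : m → ν → ℝ) :
    frobeniusPairing L x = ∑ i, ∑ j, L i j * x i j := rfl

abbrev ratPolyhedron (T : Finset ((m → ν → ℚ) × ℚ)) : Set (m → ν → ℝ) :=
  polyhedron (fun c => frobeniusPairing fun i j => (c.1 i j : ℝ)) (fun c => (c.2 : ℝ)) T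

theorem exists_rat_eq_of_mem_extremePoints {T : Finset ((m → ν → ℚ) × ℚ)} {x : m → ν → ℝ}
    (hx : x ∈ (ratPolyhedron T).extremePoints ℝ) (i : m) (j : ν) : ∃ q : ℚ, x i j = q := by
  -- a `ℚ`-linear retraction `π : ℝ → ℚ`, applied entrywise, preserves every tight constraint
  obtain ⟨π, hπ⟩ := LinearMap.exists_leftInverse_of_injective (Algebra.linearMap ℚ ℝ)
    (LinearMap.ker_eq_bot.2 (algebraMap ℚ ℝ).injective)
  have hπq (q : ℚ) : π q = q := LinearMap.congr_fun hπ q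
  have hround (L : m → ν → ℚ) :
      frobeniusPairing (fun i j => (L i j : ℝ)) (fun i j => (π (x i j) : ℝ)) =
        π (frobeniusPairing (fun i j => (L i j : ℝ)) x) := by
    simp only [frobeniusPairing_apply, map_sum, ← Rat.smul_def, map_smul, smul_eq_mul,
      Rat.cast_sum, Rat.cast_mul]
  have := eq_zero_of_mem_extremePoints_polyhedron hx (d := x - fun i j => (π (x i j) : ℝ))
    fun c _ htight => by rw [map_sub, hround, htight, hπq, sub_self]
  exact ⟨π (x i j), congrFun (congrFun (sub_eq_zero.1 this) i) j⟩

end Rational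

section Matching

variable {n : ℕ}

noncomputable def welfare (u : Fin n → Fin n → ℝ) (α : Fin n → ℝ) :
    StrongDual ℝ (Fin n → Fin n → ℝ) :=
  LinearMap.toContinuousLinearMap (frobeniusPairing fun i j => α i * u i j)

theorem welfare_apply (u x : Fin n → Fin n → ℝ) (α : Fin n → ℝ) :
    welfare u α x = ∑ i, α i * util u x i := by
  simp only [welfare, LinearMap.coe_toContinuousLinearMap', frobeniusPairing_apply, util, mul_sum,
    mul_assoc]

theorem isPM_iff_mem_doublyStochastic {x : Fin n → Fin n → ℝ} :
    isPM x ↔ Matrix.of x ∈ doublyStochastic ℝ (Fin n) := by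
  rw [mem_doublyStochastic_iff_sum]
  rfl

theorem util_sum_smul_permMatrix (u : Fin n → Fin n → ℝ) (w : Equiv.Perm (Fin n) → ℝ)
    (i : Fin n) :
    util u (∑ σ, w σ • σ.permMatrix ℝ : Matrix (Fin n) (Fin n) ℝ) i = ∑ σ, w σ * u i (σ i) := by
  simp only [util, Matrix.sum_apply, Matrix.smul_apply, mul_sum]
  rw [sum_comm]
  refine sum_congr rfl fun σ _ => ?_
  simp [Equiv.Perm.permMatrix, PEquiv.toMatrix_apply, eq_comm, mul_comm]

theorem paretoOptimal_of_forall_welfare_le {u x : Fin n → Fin n → ℝ} {α : Fin n → ℝ}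
    (hα : ∀ i, 0 < α i) (hx : ∀ y, isPM y → welfare u α y ≤ welfare u α x) :
    ParetoOptimal u x := by
  rintro ⟨y, hy, hle, i, hlt⟩
  have := hx y hy
  rw [welfare_apply, welfare_apply] at this
  refine this.not_gt (sum_lt_sum (fun k _ => ?_) ⟨i, mem_univ i, ?_⟩)
  · exact mul_le_mul_of_nonneg_left (hle k) (hα k).le
  · exact mul_lt_mul_of_pos_left hlt (hα i)

def permGain (u x₀ : Fin n → Fin n → ℝ) (σ : Equiv.Perm (Fin n)) : Fin n → ℝ :=
  fun i => u i (σ i) - util u x₀ i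

theorem util_sum_smul_permMatrix_sub (u x₀ : Fin n → Fin n → ℝ) {w : Equiv.Perm (Fin n) → ℝ}
    (hw : ∑ σ, w σ = 1) (i : Fin n) :
    util u (∑ σ, w σ • σ.permMatrix ℝ : Matrix (Fin n) (Fin n) ℝ) i - util u x₀ i =
      ∑ σ, w σ * permGain u x₀ σ i := by
  simp only [util_sum_smul_permMatrix, permGain, mul_sub, sum_sub_distrib, ← sum_mul, hw, one_mul]

theorem eq_zero_of_mem_coneGen_permGain {u x₀ : Fin n → Fin n → ℝ} (hpo : ParetoOptimal u x₀)
    {y : Fin n → ℝ} (hy : y ∈ coneGen (permGain u x₀)) (hy0 : 0 ≤ y) : y = 0 := by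
  obtain ⟨c, hc, rfl⟩ := mem_coneGen.1 hy
  by_contra hne
  have hs : 0 < ∑ σ, c σ := by
    refine (sum_nonneg fun σ _ => hc σ).lt_of_ne fun hs => hne ?_
    rw [eq_comm, sum_eq_zero_iff_of_nonneg fun σ _ => hc σ] at hs
    simp [hs]
  -- normalising `c` gives a matching whose utility gain over `x₀` is a positive multiple of `y`
  set w : Equiv.Perm (Fin n) → ℝ := fun σ => c σ / ∑ τ, c τ
  have hw : ∑ σ, w σ = 1 := by simp only [w, ← sum_div, div_self hs.ne']
  have hz : isPM (∑ σ, w σ • σ.permMatrix ℝ : Matrix (Fin n) (Fin n) ℝ) :=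
    isPM_iff_mem_doublyStochastic.2 <| convex_doublyStochastic.sum_mem
      (fun σ _ => div_nonneg (hc σ) hs.le) hw fun σ _ => permMatrix_mem_doublyStochastic
  have hgain (i : Fin n) : util u (∑ σ, w σ • σ.permMatrix ℝ : Matrix (Fin n) (Fin n) ℝ) i -
      util u x₀ i = (∑ σ, c σ • permGain u x₀ σ) i / ∑ τ, c τ := by
    simp only [util_sum_smul_permMatrix_sub u x₀ hw, w, Finset.sum_apply, Pi.smul_apply,
      smul_eq_mul, sum_div]
    exact sum_congr rfl fun σ _ => div_mul_eq_mul_div _ _ _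
  obtain ⟨i, hi⟩ : ∃ i, 0 < (∑ σ, c σ • permGain u x₀ σ) i := by
    by_contra! h
    exact hne (funext fun i => le_antisymm (h i) (hy0 i))
  refine hpo ⟨_, hz, fun k => ?_, i, ?_⟩
  · linarith [hgain k, div_nonneg (hy0 k) hs.le]
  · linarith [hgain i, div_pos hi hs]

theorem exists_pos_weights_of_paretoOptimal {u x₀ : Fin n → Fin n → ℝ}
    (hpo : ParetoOptimal u x₀) :
    ∃ α : Fin n → ℝ, (∀ i, 0 < α i) ∧ ∀ y, isPM y → welfare u α y ≤ welfare u α x₀ := by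
  obtain ⟨α, hα, hαv⟩ := exists_pos_dotProduct_nonpos (permGain u x₀) fun y hy hy0 =>
    eq_zero_of_mem_coneGen_permGain hpo hy hy0
  refine ⟨α, hα, fun y hy => ?_⟩
  obtain ⟨w, hw0, hw1, hwy⟩ :=
    exists_eq_sum_perm_of_mem_doublyStochastic (isPM_iff_mem_doublyStochastic.1 hy)
  have hgain (i : Fin n) : util u y i - util u x₀ i = ∑ σ, w σ * permGain u x₀ σ i := by
    rw [← util_sum_smul_permMatrix_sub u x₀ hw1 i, hwy]
    rfl
  have key : welfare u α y - welfare u α x₀ = ∑ σ, w σ * α ⬝ᵥ permGain u x₀ σ := by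
    simp only [welfare_apply, ← sum_sub_distrib, ← mul_sub, hgain, dotProduct, mul_sum]
    rw [sum_comm]
    exact sum_congr rfl fun σ _ => sum_congr rfl fun i _ => by ring
  have : ∑ σ, w σ * α ⬝ᵥ permGain u x₀ σ ≤ 0 :=
    sum_nonpos fun σ _ => mul_nonpos_of_nonneg_of_nonpos (hw0 σ) (hαv σ)
  linarith

end Matching

theorem IsCompact.exists_mem_extremePoints_forall_le {E : Type*} [AddCommGroup E] [Module ℝ E]
    [TopologicalSpace E] [T2Space E] [IsTopologicalAddGroup E] [ContinuousSMul ℝ E]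
    [LocallyConvexSpace ℝ E] {A : Set E} (hA : IsCompact A) (hne : A.Nonempty)
    (l : StrongDual ℝ E) : ∃ x ∈ A.extremePoints ℝ, ∀ y ∈ A, l y ≤ l x := by
  have hF : IsExposed ℝ A (l.toExposed A) := ContinuousLinearMap.toExposed.isExposed
  obtain ⟨z, hz, hzmax⟩ := hA.exists_isMaxOn hne l.continuous.continuousOn
  obtain ⟨x, hx⟩ := (hF.isCompact hA).extremePoints_nonempty ⟨z, hz, hzmax⟩
  exact ⟨x, hF.isExtreme.extremePoints_subset_extremePoints hx, (extremePoints_subset hx).2⟩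

section EnvyFree

variable {n : ℕ}

theorem isClosed_PEF (u : Fin n → Fin n → ℝ) : IsClosed (PEF u) := by
  simp only [PEF, isPM, EnvyFree, Set.ofPred_and, Set.ofPred_forall]
  refine .inter (.inter ?_ (.inter ?_ ?_)) ?_ <;> repeat refine isClosed_iInter fun _ => ?_
  · exact isClosed_le continuous_const (by fun_prop)
  · exact isClosed_eq (by fun_prop) continuous_const
  · exact isClosed_eq (by fun_prop) continuous_const
  · exact isClosed_le (by fun_prop) (by fun_prop)

theorem isCompact_PEF (u : Fin n → Fin n → ℝ) : IsCompact (PEF u) := by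
  refine (isCompact_univ_pi fun _ => isCompact_univ_pi fun _ =>
    isCompact_Icc (a := (0 : ℝ)) (b := 1)).of_isClosed_subset (isClosed_PEF u) ?_
  rintro x ⟨⟨hx0, hrow, -⟩, -⟩ i - j -
  exact ⟨hx0 i j, hrow i ▸ single_le_sum (fun k _ => hx0 i k) (mem_univ j)⟩

theorem exists_paretoOptimal_mem_extremePoints_PEF {u x₀ : Fin n → Fin n → ℝ}
    (hx₀ : x₀ ∈ PEF u) (hpo : ParetoOptimal u x₀) :
    ∃ x ∈ (PEF u).extremePoints ℝ, ParetoOptimal u x := by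
  obtain ⟨α, hα, hmax⟩ := exists_pos_weights_of_paretoOptimal hpo
  obtain ⟨x, hx, hxmax⟩ :=
    (isCompact_PEF u).exists_mem_extremePoints_forall_le ⟨x₀, hx₀⟩ (welfare u α)
  exact ⟨x, hx, paretoOptimal_of_forall_welfare_le hα fun y hy =>
    (hmax y hy).trans (hxmax x₀ hx₀)⟩

/-- Each equation of `P_EF` appears as two opposite inequalities. -/
def pefConstraints (u : Fin n → Fin n → ℚ) : Finset ((Fin n → Fin n → ℚ) × ℚ) :=
  univ.image (fun p : Fin n × Fin n => (Pi.single p.1 (Pi.single p.2 1), 0)) ∪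
  (univ.image (fun i => (-Pi.single i 1, -1)) ∪ (univ.image (fun i => (Pi.single i 1, 1)) ∪
  (univ.image (fun j => (fun _ => -Pi.single j 1, -1)) ∪
  (univ.image (fun j => (fun _ => Pi.single j 1, 1)) ∪
  univ.image (fun p : Fin n × Fin n => (Pi.single p.1 (u p.1) - Pi.single p.2 (u p.1), 0))))))

theorem PEF_eq_ratPolyhedron (u : Fin n → Fin n → ℚ) :
    PEF (fun i j => (u i j : ℝ)) = ratPolyhedron (pefConstraints u) := by
  ext x
  simp only [PEF, isPM, EnvyFree, ratPolyhedron, polyhedron, pefConstraints, forall_mem_union,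
    forall_mem_image, mem_univ, forall_const, Set.mem_ofPred_eq, Prod.forall, frobeniusPairing_apply,
    Pi.single_apply, ite_apply, Pi.zero_apply, Pi.one_apply, Pi.neg_apply, Pi.sub_apply,
    apply_ite (Rat.cast : ℚ → ℝ), Rat.cast_zero, Rat.cast_one, Rat.cast_neg, Rat.cast_sub, ite_mul,
    one_mul, zero_mul, neg_mul, sub_mul, sum_ite_irrel, sum_ite_eq', ↓reduceIte, sum_const_zero,
    sum_neg_distrib, sum_sub_distrib, neg_le_neg_iff, sub_nonneg]
  simp only [le_antisymm_iff, forall_and, and_assoc]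

end EnvyFree

theorem efpo_rational_general {n : ℕ} (u : Fin n → Fin n → ℚ)
    (hex : ∃ x : Fin n → Fin n → ℝ,
      isPM x ∧ EnvyFree (fun i j => (u i j : ℝ)) x ∧ ParetoOptimal (fun i j => (u i j : ℝ)) x) :
    ∃ x : Fin n → Fin n → ℝ,
      x ∈ Set.extremePoints ℝ (PEF (fun i j => (u i j : ℝ))) ∧
      isPM x ∧ EnvyFree (fun i j => (u i j : ℝ)) x ∧
      ParetoOptimal (fun i j => (u i j : ℝ)) x ∧
      ∀ i j, ∃ q : ℚ, x i j = (q : ℝ) := by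
  obtain ⟨x₀, hPM, hEF, hPO⟩ := hex
  obtain ⟨x, hx, hxPO⟩ := exists_paretoOptimal_mem_extremePoints_PEF ⟨hPM, hEF⟩ hPO
  have hrat := exists_rat_eq_of_mem_extremePoints (PEF_eq_ratPolyhedron u ▸ hx)
  exact ⟨x, hx, (extremePoints_subset hx).1, (extremePoints_subset hx).2, hxPO, hrat⟩

/-- if an envy-free Pareto-optimal fractional perfect matching exists,
then there is one which is a vertex (extreme point) of `P_EF`; in particular, with
rational utilities there is a rational envy-free Pareto-optimal allocation. -/
theorem efpo_rational {n : ℕ} (u : Fin n → Fin n → ℚ)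
    (hu : ∀ i j, 0 ≤ u i j)
    (hex : ∃ x : Fin n → Fin n → ℝ,
      isPM x ∧ EnvyFree (fun i j => (u i j : ℝ)) x ∧ ParetoOptimal (fun i j => (u i j : ℝ)) x) :
    ∃ x : Fin n → Fin n → ℝ,
      x ∈ Set.extremePoints ℝ (PEF (fun i j => (u i j : ℝ))) ∧
      isPM x ∧ EnvyFree (fun i j => (u i j : ℝ)) x ∧
      ParetoOptimal (fun i j => (u i j : ℝ)) x ∧
      ∀ i j, ∃ q : ℚ, x i j = (q : ℝ) :=
  efpo_rational_general u hex
end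

section
/- Let x be a Pareto-optimal fractional perfect matching maximizing Σ_i α_i u_i·x_i with α > 0, and let (p, q) be an optimal dual solution to this assignment LP with budgets b_i := α_i u_i·x_i − q_i. Then for each agent i, b_i ≥ 0, the bundle x_i costs exactly b_i (i.e., p·x_i = b_i), and x_i maximizes u_i·y over {y ≥ 0 : Σ_j y_j ≤ 1, p·y ≤ b_i}. -/
/-- from a primal-dual optimal pair for the weighted assignment LP,
the budgets `b i = α i * (u_i · x_i) - q i` are nonnegative, each bundle costs
exactly its budget, and each bundle is an optimal bundle at that budget. -/
theorem po_optimal_bundles {n : ℕ} (u x : Fin n → Fin n → ℝ)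
    (hu : ∀ i j, 0 ≤ u i j)
    (α : Fin n → ℝ) (hα : ∀ i, 0 < α i)
    (p q : Fin n → ℝ) (hp : ∀ j, 0 ≤ p j) (hq : ∀ i, 0 ≤ q i)
    (hx : isPM x)
    -- dual feasibility
    (hfeas : ∀ i j, α i * u i j ≤ q i + p j)
    -- strong duality (primal optimum = dual objective)
    (hdual : ∑ i, α i * util u x i = ∑ i, q i + ∑ j, p j)
    (b : Fin n → ℝ) (hb : ∀ i, b i = α i * util u x i - q i) :
    ∀ i : Fin n,
      0 ≤ b i ∧
      (∑ j, p j * x i j = b i) ∧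
      ∀ y : Fin n → ℝ, (∀ j, 0 ≤ y j) → (∑ j, y j ≤ 1) → (∑ j, p j * y j ≤ b i) →
        ∑ j, u i j * y j ≤ util u x i := by
  obtain ⟨hxnn, hrow, hcol⟩ := hx
  -- per-agent weak duality: α_i util_i ≤ q_i + p·x_i
  have hslack : ∀ i, 0 ≤ (q i + ∑ j, p j * x i j) - α i * util u x i := by
    intro i
    have h1 : α i * util u x i ≤ q i + ∑ j, p j * x i j := by
      have : α i * util u x i = ∑ j, (α i * u i j) * x i j := by
        simp [util, Finset.mul_sum]; ring_nf
      rw [this]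
      calc ∑ j, (α i * u i j) * x i j ≤ ∑ j, (q i + p j) * x i j := by
            apply Finset.sum_le_sum
            intro j _
            exact mul_le_mul_of_nonneg_right (hfeas i j) (hxnn i j)
        _ = q i * ∑ j, x i j + ∑ j, p j * x i j := by
            rw [Finset.mul_sum, ← Finset.sum_add_distrib]
            congr 1; ext j; ring
        _ = q i + ∑ j, p j * x i j := by rw [hrow i, mul_one]
    linarith
  -- the sum of slacks is zero
  have hsum : ∑ i, ((q i + ∑ j, p j * x i j) - α i * util u x i) = 0 := by
    have hpx : ∑ i, ∑ j, p j * x i j = ∑ j, p j := by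
      rw [Finset.sum_comm]
      congr 1; ext j
      rw [← Finset.mul_sum, hcol j, mul_one]
    rw [Finset.sum_sub_distrib, Finset.sum_add_distrib, hpx, hdual]
    ring
  -- hence each slack is zero
  have hzero : ∀ i, q i + ∑ j, p j * x i j = α i * util u x i := by
    intro i
    have := (Finset.sum_eq_zero_iff_of_nonneg (fun i _ => hslack i)).mp hsum i (Finset.mem_univ i)
    linarith
  intro i
  have hbi : ∑ j, p j * x i j = b i := by rw [hb i]; linarith [hzero i]
  have hbnn : 0 ≤ b i := by
    rw [← hbi]
    exact Finset.sum_nonneg fun j _ => mul_nonneg (hp j) (hxnn i j)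
  refine ⟨hbnn, hbi, ?_⟩
  intro y hy hysum hyb
  have key : α i * ∑ j, u i j * y j ≤ α i * util u x i := by
    calc α i * ∑ j, u i j * y j = ∑ j, (α i * u i j) * y j := by
          rw [Finset.mul_sum]; congr 1; ext j; ring
      _ ≤ ∑ j, (q i + p j) * y j := by
          apply Finset.sum_le_sum
          intro j _
          exact mul_le_mul_of_nonneg_right (hfeas i j) (hy j)
      _ = q i * ∑ j, y j + ∑ j, p j * y j := by
          rw [Finset.mul_sum, ← Finset.sum_add_distrib]
          congr 1; ext j; ring
      _ ≤ q i * 1 + b i := by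
          have : q i * ∑ j, y j ≤ q i * 1 := mul_le_mul_of_nonneg_left hysum (hq i)
          linarith
      _ = α i * util u x i := by rw [hb i]; ring
  exact le_of_mul_le_mul_left key (hα i)
end

section
/- In the competitive-equilibrium setup derived from a Pareto-optimal allocation, if two goods j and j' are of the same type (every agent has identical utility for them), then their dual prices are equal: p_j = p_{j'}. -/
/-!
Every good is fully allocated, so some agent `i` holds a positive share of good `j`. Complementary
slackness makes `q i + p j = α i * u i j` tight there, while dual feasibility at the equally valued
good `j'` gives `α i * u i j' ≤ q i + p j'`; hence `p j ≤ p j'`, and by symmetry equality.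
-/

lemma isPM.exists_pos_of_col {n : ℕ} {x : Fin n → Fin n → ℝ} (hx : isPM x) (j : Fin n) :
    ∃ i, 0 < x i j := by
  have hsum : ∑ _i : Fin n, (0 : ℝ) < ∑ i, x i j := by
    rw [hx.2.2 j, Finset.sum_const_zero]
    exact one_pos
  obtain ⟨i, -, hi⟩ := Finset.exists_lt_of_sum_lt hsum
  exact ⟨i, hi⟩

lemma price_le_of_same_type {n : ℕ} {u x : Fin n → Fin n → ℝ} {α p q : Fin n → ℝ}
    (hx : isPM x) (hfeas : ∀ i j, α i * u i j ≤ q i + p j)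
    (hcs : ∀ i j, 0 < x i j → q i + p j = α i * u i j)
    {j j' : Fin n} (htype : ∀ i, u i j = u i j') :
    p j ≤ p j' := by
  obtain ⟨i, hi⟩ := hx.exists_pos_of_col j
  have htight := hcs i j hi
  have hfeas' := hfeas i j'
  rw [← htype i] at hfeas'
  linarith

theorem equal_goods_equal_prices_general {n : ℕ} (u x : Fin n → Fin n → ℝ)
    (α : Fin n → ℝ)
    (p q : Fin n → ℝ)
    (hx : isPM x)
    -- dual feasibility
    (hfeas : ∀ i j, α i * u i j ≤ q i + p j)
    -- complementary slackness
    (hcs : ∀ i j, 0 < x i j → q i + p j = α i * u i j)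
    (j j' : Fin n)
    -- goods j and j' are of the same type
    (htype : ∀ i, u i j = u i j') :
    p j = p j' :=
  le_antisymm (price_le_of_same_type hx hfeas hcs htype)
    (price_le_of_same_type hx hfeas hcs fun i => (htype i).symm)

/-- in the competitive equilibrium derived from a Pareto-optimal
allocation (primal-dual optimal pair with complementary slackness), two goods of
the same type (identical utility for every agent) have equal prices. -/
theorem equal_goods_equal_prices {n : ℕ} (u x : Fin n → Fin n → ℝ)
    (hu : ∀ i j, 0 ≤ u i j)
    (α : Fin n → ℝ) (hα : ∀ i, 0 < α i)
    (p q : Fin n → ℝ) (hp : ∀ j, 0 ≤ p j) (hq : ∀ i, 0 ≤ q i)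
    (hx : isPM x)
    -- dual feasibility
    (hfeas : ∀ i j, α i * u i j ≤ q i + p j)
    -- complementary slackness
    (hcs : ∀ i j, 0 < x i j → q i + p j = α i * u i j)
    (j j' : Fin n)
    -- goods j and j' are of the same type
    (htype : ∀ i, u i j = u i j') :
    p j = p j' :=
  equal_goods_equal_prices_general u x α p q hx hfeas hcs j j' htype
end

section
/- Any optimal solution x of the Nash bargaining program (maximize Π_{i∈A} u_i·x_i over fractional perfect matchings) is 2-approximately envy-free: for all agents i, i', u_i·x_i ≥ (1/2) u_i·x_{i'}. -/
open Finset

theorem convex_setOf_isPM (n : ℕ) : Convex ℝ {x : Fin n → Fin n → ℝ | isPM x} := by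
  rintro x ⟨hx0, hxr, hxc⟩ y ⟨hy0, hyr, hyc⟩ a b ha hb hab
  refine ⟨fun i j => ?_, fun i => ?_, fun j => ?_⟩
  · simp only [Pi.add_apply, Pi.smul_apply, smul_eq_mul]
    exact add_nonneg (mul_nonneg ha (hx0 i j)) (mul_nonneg hb (hy0 i j))
  · simp only [Pi.add_apply, Pi.smul_apply, smul_eq_mul, sum_add_distrib, ← mul_sum, hxr, hyr]
    linarith
  · simp only [Pi.add_apply, Pi.smul_apply, smul_eq_mul, sum_add_distrib, ← mul_sum, hxc, hyc]
    linarith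

theorem isPM.comp_perm {n : ℕ} {x : Fin n → Fin n → ℝ} (hx : isPM x) (σ : Equiv.Perm (Fin n)) :
    isPM (x ∘ σ) :=
  ⟨fun i j => hx.1 (σ i) j, fun i => hx.2.1 (σ i),
    fun j => (Equiv.sum_comp σ (fun i => x i j)).trans (hx.2.2 j)⟩

theorem util_smul_add_smul {n : ℕ} (u x y : Fin n → Fin n → ℝ) (a b : ℝ) (i : Fin n) :
    util u (a • x + b • y) i = a * util u x i + b * util u y i := by
  simp only [util, Pi.add_apply, Pi.smul_apply, smul_eq_mul, mul_sum, ← sum_add_distrib]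
  exact sum_congr rfl fun j _ => by ring

theorem Finset.prod_lt_prod_of_mul_lt_mul_of_eqOn_compl_pair {ι R : Type*} [Fintype ι]
    [DecidableEq ι] [CommSemiring R] [PartialOrder R] [IsStrictOrderedRing R] {f g : ι → R}
    {i i' : ι} (hii' : i ≠ i') (hf : ∀ k, 0 < f k) (hfg : ∀ k, k ≠ i → k ≠ i' → f k = g k)
    (hlt : f i * f i' < g i * g i') : ∏ k, f k < ∏ k, g k := by
  have hi' : i' ∈ univ.erase i := mem_erase.2 ⟨hii'.symm, mem_univ _⟩
  have split (h : ι → R) : ∏ k, h k = h i * h i' * ∏ k ∈ (univ.erase i).erase i', h k := by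
    rw [← mul_prod_erase univ h (mem_univ i), ← mul_prod_erase _ h hi', mul_assoc]
  have hrest : ∏ k ∈ (univ.erase i).erase i', f k = ∏ k ∈ (univ.erase i).erase i', g k :=
    prod_congr rfl fun k hk => by
      obtain ⟨hki', hki, -⟩ := by simpa only [mem_erase] using hk
      exact hfg k hki hki'
  rw [split f, split g, ← hrest]
  exact mul_lt_mul_of_pos_right hlt (prod_pos fun k _ => hf k)

theorem exists_mul_lt_interp_mul_interp {a b c d : ℝ} (ha : 0 < a) (hc : 0 < c) (hd : 0 ≤ d)
    (hab : 2 * a < b) :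
    ∃ t : ℝ, 0 ≤ t ∧ t ≤ 1 ∧ a * c < ((1 - t) * a + t * b) * ((1 - t) * c + t * d) := by
  have hba : 0 < b - a := by linarith
  have hb2a : 0 < b - 2 * a := by linarith
  -- chosen so that the first factor becomes `b / 2` and `1 - t = b / (2 (b - a))`
  set t := (b - 2 * a) / (2 * (b - a)) with ht
  have ht0 : 0 ≤ t := by positivity
  refine ⟨t, ht0, ?_, ?_⟩
  · rw [ht, div_le_one (by positivity)]
    linarith
  have hfirst : (1 - t) * a + t * b = b / 2 := by
    rw [ht]
    field_simp
    ring
  have hcompl : 1 - t = b / (2 * (b - a)) := by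
    rw [ht]
    field_simp
    ring
  have hgap : b / 2 * (b / (2 * (b - a)) * c) - a * c = (b - 2 * a) ^ 2 * c / (4 * (b - a)) := by
    field_simp
    ring
  rw [hfirst, hcompl]
  calc a * c < b / 2 * (b / (2 * (b - a)) * c) := by
        rw [← sub_pos, hgap]
        positivity
    _ ≤ b / 2 * (b / (2 * (b - a)) * c + t * d) := by
        have hb : 0 ≤ b / 2 := by linarith
        gcongr
        exact le_add_of_nonneg_right (mul_nonneg ht0 hd)

/-- any maximizer of the Nash bargaining program over fractional
perfect matchings is 2-approximately envy-free. -/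
theorem nash_two_envy_free {n : ℕ} (u x : Fin n → Fin n → ℝ)
    (hu : ∀ i j, 0 ≤ u i j) (hx : isPM x)
    (hpos : ∀ i, 0 < util u x i)
    (hmax : ∀ y, isPM y → ∏ i, util u y i ≤ ∏ i, util u x i) :
    ∀ i i' : Fin n, (1 / 2) * (∑ j, u i j * x i' j) ≤ util u x i := by
  intro i i'
  rcases eq_or_ne i i' with rfl | hii'
  · linarith [hpos i, show (∑ j, u i j * x i j) = util u x i from rfl]
  by_contra! henvy
  obtain ⟨t, ht0, ht1, hlt⟩ := exists_mul_lt_interp_mul_interp (hpos i) (hpos i')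
    (sum_nonneg fun j _ => mul_nonneg (hu i' j) (hx.1 i j)) (by linarith)
  set y := (1 - t) • x + t • (x ∘ Equiv.swap i i')
  have hy : isPM y := convex_setOf_isPM n hx (hx.comp_perm _) (by linarith) ht0 (by ring)
  have hyk (k : Fin n) :
      util u y k = (1 - t) * util u x k + t * ∑ j, u k j * x (Equiv.swap i i' k) j :=
    util_smul_add_smul u _ _ _ _ k
  refine (hmax y hy).not_gt (prod_lt_prod_of_mul_lt_mul_of_eqOn_compl_pair hii' hpos
    (fun k hki hki' => ?_) ?_)
  · rw [hyk, Equiv.swap_apply_of_ne_of_ne hki hki']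
    unfold util
    ring
  · rwa [hyk, hyk, Equiv.swap_apply_left, Equiv.swap_apply_right]
end

section
/- No mechanism that outputs maximizers of the Nash bargaining program is (2−ε)-incentive compatible for any ε > 0: in the n-agent instance above, by truthfully reporting the special agent gets utility 1, while by misreporting the same utilities as the others they get utility 2(n−1)/n + 1/n, and this ratio tends to 2 as n → ∞. -/
/-- True utilities for the lower-bound instance on `m + 1` agents and goods: agent 0
is the special agent (utility 2 for each of the `m` desirable goods `j ≠ 0`, utility
1 for the undesirable good `0`); the other agents have utility 1 for desirable goods
and 0 for the undesirable good. -/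
def uTrue (m : ℕ) : Fin (m + 1) → Fin (m + 1) → ℝ := fun i j =>
  if i = 0 then (if j = 0 then 1 else 2) else (if j = 0 then 0 else 1)

/-- Misreported utilities: agent 0 reports the same utilities as everyone else. -/
def uLie (m : ℕ) : Fin (m + 1) → Fin (m + 1) → ℝ := fun _ j => if j = 0 then 0 else 1

/-!
Truthfully, the Nash product is `(1 + S) * ∏ (1 - tᵢ)`, where `tᵢ` is the share of the undesirable
good given to the ordinary agent `i` and `S = ∑ tᵢ`. Since `1 - t ≤ exp (-t)` and `1 + S < exp S`
for `S > 0`, this is below the value `1` of the identity allocation unless `S = 0`, so the special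
agent is left with the undesirable good alone. After the misreport all agents are identical, the
Nash product is `∏ (1 - tᵢ)` with `∑ tᵢ = 1`, and strict AM-GM forces `tᵢ = 1 / n` for all `i`:
the special agent then keeps `(n - 1) / n` units of desirable goods.
-/

open Finset

def IsNashOptimal {n : ℕ} (u x : Fin n → Fin n → ℝ) : Prop :=
  ∀ z, isPM z → ∏ i, util u z i ≤ ∏ i, util u x i

theorem Finset.prod_lt_pow_card_of_ne {ι : Type*} {s : Finset ι} {z : ι → ℝ}
    (hz : ∀ i ∈ s, 0 ≤ z i) (hne : ∃ j ∈ s, ∃ k ∈ s, z j ≠ z k) :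
    ∏ i ∈ s, z i < ((∑ i ∈ s, z i) / #s) ^ #s := by
  obtain ⟨j, hj, -⟩ := id hne
  have hcard : (#s : ℝ) ≠ 0 := by exact_mod_cast (Finset.card_pos.mpr ⟨j, hj⟩).ne'
  have hamgm := (Real.geom_mean_lt_arith_mean_weighted_iff_of_pos s (fun _ ↦ (#s : ℝ)⁻¹) z
    (fun _ _ ↦ by positivity) (by simp [hcard]) hz).mpr (by simpa using hne)
  rw [Real.finsetProd_rpow s z hz, ← Finset.mul_sum, inv_mul_eq_div] at hamgm
  have hprod : 0 ≤ ∏ i ∈ s, z i := Finset.prod_nonneg hz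
  calc ∏ i ∈ s, z i = ((∏ i ∈ s, z i) ^ (#s : ℝ)⁻¹) ^ #s :=
        (Real.rpow_inv_natCast_pow hprod (by exact_mod_cast hcard)).symm
    _ < _ := pow_lt_pow_left₀ hamgm (by positivity) (by exact_mod_cast hcard)

theorem one_add_sum_mul_prod_one_sub_lt_one {ι : Type*} {s : Finset ι} {t : ι → ℝ}
    (ht : ∀ i ∈ s, t i ≤ 1) (hS : 0 < ∑ i ∈ s, t i) :
    (1 + ∑ i ∈ s, t i) * ∏ i ∈ s, (1 - t i) < 1 := by
  set S := ∑ i ∈ s, t i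
  calc (1 + S) * ∏ i ∈ s, (1 - t i) ≤ (1 + S) * ∏ i ∈ s, Real.exp (-t i) := by
        refine mul_le_mul_of_nonneg_left (Finset.prod_le_prod (fun i hi ↦ ?_) (fun i _ ↦ ?_)) ?_
        · linarith [ht i hi]
        · exact Real.one_sub_le_exp_neg (t i)
        · positivity
    _ = (1 + S) * Real.exp (-S) := by rw [← Real.exp_sum, Finset.sum_neg_distrib]
    _ < Real.exp S * Real.exp (-S) := by
        gcongr
        linarith [Real.add_one_lt_exp hS.ne']
    _ = 1 := by rw [← Real.exp_add, add_neg_cancel, Real.exp_zero]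

theorem isPM.le_one {n : ℕ} {x : Fin n → Fin n → ℝ} (hx : isPM x) (i j : Fin n) : x i j ≤ 1 :=
  hx.2.2 j ▸ Finset.single_le_sum (fun i' _ ↦ hx.1 i' j) (Finset.mem_univ i)

theorem isPM_one (n : ℕ) : isPM (1 : Matrix (Fin n) (Fin n) ℝ) := by
  refine ⟨fun i j ↦ ?_, fun i ↦ ?_, fun j ↦ ?_⟩ <;> simp [Matrix.one_apply, apply_ite]

theorem isPM_const (n : ℕ) [NeZero n] : isPM (fun _ _ : Fin n ↦ (n : ℝ)⁻¹) := by
  refine ⟨fun _ _ ↦ by positivity, fun _ ↦ ?_, fun _ ↦ ?_⟩ <;> simp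

theorem sum_ite_zero_mul {n : ℕ} (a b : ℝ) (f : Fin (n + 1) → ℝ) :
    ∑ j, (if j = 0 then a else b) * f j = b * ∑ j, f j - (b - a) * f 0 := by
  simp only [Fin.sum_univ_succ, Fin.succ_ne_zero, if_true, if_false, ← Finset.mul_sum]
  ring

section Utilities

variable {m : ℕ} {z : Fin (m + 1) → Fin (m + 1) → ℝ}

theorem util_uLie (hz : ∀ i, ∑ j, z i j = 1) (i : Fin (m + 1)) :
    util (uLie m) z i = 1 - z i 0 := by
  simp only [util, uLie, sum_ite_zero_mul, hz]
  ring

theorem util_uTrue_zero (hz : ∀ i, ∑ j, z i j = 1) : util (uTrue m) z 0 = 2 - z 0 0 := by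
  simp only [util, uTrue, if_true, sum_ite_zero_mul, hz]
  ring

theorem util_uTrue_succ (hz : ∀ i, ∑ j, z i j = 1) (i : Fin m) :
    util (uTrue m) z i.succ = 1 - z i.succ 0 := by
  simp only [util, uTrue, Fin.succ_ne_zero, if_false, sum_ite_zero_mul, hz]
  ring

theorem prod_util_uLie (hz : ∀ i, ∑ j, z i j = 1) :
    ∏ i, util (uLie m) z i = ∏ i, (1 - z i 0) :=
  Finset.prod_congr rfl fun i _ ↦ util_uLie hz i

theorem prod_util_uTrue (hz : ∀ i, ∑ j, z i j = 1) :
    ∏ i, util (uTrue m) z i = (2 - z 0 0) * ∏ i : Fin m, (1 - z i.succ 0) := by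
  simp only [Fin.prod_univ_succ, util_uTrue_zero hz, util_uTrue_succ hz]

end Utilities

theorem util_uTrue_zero_of_isNashOptimal {m : ℕ} {x : Fin (m + 1) → Fin (m + 1) → ℝ}
    (hx : isPM x) (hmax : IsNashOptimal (uTrue m) x) :
    util (uTrue m) x 0 = 1 := by
  have hcol : x 0 0 + ∑ i : Fin m, x i.succ 0 = 1 := by rw [← hx.2.2 0, Fin.sum_univ_succ]
  have hone : ∏ i, util (uTrue m) (1 : Matrix (Fin (m + 1)) (Fin (m + 1)) ℝ) i = 1 := by
    norm_num [prod_util_uTrue (isPM_one _).2.1, Fin.succ_ne_zero]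
  have hid : 1 ≤ (1 + ∑ i : Fin m, x i.succ 0) * ∏ i : Fin m, (1 - x i.succ 0) := by
    have := hone ▸ hmax _ (isPM_one _)
    rwa [prod_util_uTrue hx.2.1, show 2 - x 0 0 = 1 + ∑ i : Fin m, x i.succ 0 by linarith] at this
  have hS : ∑ i : Fin m, x i.succ 0 = 0 := by
    refine le_antisymm (not_lt.mp fun hpos ↦ ?_) (Finset.sum_nonneg fun i _ ↦ hx.1 _ _)
    exact hid.not_gt (one_add_sum_mul_prod_one_sub_lt_one (fun i _ ↦ hx.le_one _ _) hpos)
  rw [util_uTrue_zero hx.2.1]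
  linarith

theorem col_zero_eq_of_isNashOptimal_uLie {m : ℕ} {y : Fin (m + 1) → Fin (m + 1) → ℝ}
    (hy : isPM y) (hmax : IsNashOptimal (uLie m) y) (i : Fin (m + 1)) :
    y i 0 = 1 / (m + 1) := by
  have hsum : ∑ i, (1 - y i 0) = m := by
    simp [Finset.sum_sub_distrib, hy.2.2 0]
  have hconst : ∀ j, y j 0 = y i 0 := by
    by_contra! ⟨j, hj⟩
    have hlt := Finset.prod_lt_pow_card_of_ne (s := univ) (z := fun i ↦ 1 - y i 0)
      (fun i _ ↦ sub_nonneg.2 (hy.le_one i 0)) ⟨j, mem_univ _, i, mem_univ _, by simpa using hj⟩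
    have hle := hmax _ (isPM_const (m + 1))
    rw [prod_util_uLie hy.2.1, prod_util_uLie (isPM_const _).2.1] at hle
    have hunif : 1 - ((m + 1 : ℕ) : ℝ)⁻¹ = m / (m + 1) := by
      field_simp
      push_cast
      ring
    simp only [hsum, Finset.prod_const, hunif, card_univ, Fintype.card_fin] at hlt hle
    push_cast at hlt
    linarith
  have := hy.2.2 0
  rw [Finset.sum_congr rfl fun j _ ↦ hconst j] at this
  simp only [sum_const, card_univ, Fintype.card_fin, nsmul_eq_mul, Nat.cast_add, Nat.cast_one] at this
  field_simp
  linarith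

/-- no mechanism outputting Nash bargaining maximizers is
(2−ε)-incentive compatible for any ε > 0: in the instance above (with `n = m + 1`
agents), truthful reporting gives the special agent utility 1, misreporting gives
true utility 2(n−1)/n + 1/n, and this exceeds (2−ε)·1 for large n. -/
theorem nash_not_two_minus_eps_ic :
    ∀ ε : ℝ, 0 < ε → ∃ m : ℕ, 1 ≤ m ∧
      ∀ x y : Fin (m + 1) → Fin (m + 1) → ℝ, isPM x → isPM y →
        (∀ z, isPM z → ∏ i, util (uTrue m) z i ≤ ∏ i, util (uTrue m) x i) →
        (∀ z, isPM z → ∏ i, util (uLie m) z i ≤ ∏ i, util (uLie m) y i) →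
        util (uTrue m) x 0 = 1 ∧
        util (uTrue m) y 0 = 2 * (m : ℝ) / (m + 1) + 1 / (m + 1) ∧
        (2 - ε) * util (uTrue m) x 0 < util (uTrue m) y 0 := by
  intro ε hε
  obtain ⟨k, hk⟩ := exists_nat_one_div_lt hε
  refine ⟨k + 1, le_add_self, fun x y hx hy hmaxTrue hmaxLie ↦ ?_⟩
  have hx0 := util_uTrue_zero_of_isNashOptimal hx hmaxTrue
  have hy0 : util (uTrue (k + 1)) y 0 = 2 - 1 / ((k + 1 : ℕ) + 1) := by
    rw [util_uTrue_zero hy.2.1, col_zero_eq_of_isNashOptimal_uLie hy hmaxLie 0]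
  have hsmall : 1 / (((k + 1 : ℕ) : ℝ) + 1) < ε :=
    lt_of_le_of_lt (one_div_le_one_div_of_le (by positivity) (by push_cast; linarith)) hk
  refine ⟨hx0, ?_, ?_⟩
  · rw [hy0]
    field_simp
    ring
  · rw [hx0, hy0]
    linarith
end

section
/- In the two-sided bipartite market with agents {1,2,3} and {4,5,6} where, asymmetrically, agent 1 has utility 1 only for 4; agent 2 has utility 1 for 5 and 6; agent 4 has utility 1 for 2; all other utilities are 0 (as in the directed-edge figure), no fractional perfect matching is simultaneously envy-free and Pareto-optimal. -/
/-- Utility of agent `i ∈ A` in a two-sided market: `u i · x i`. -/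
def utilA {n : ℕ} (u x : Fin n → Fin n → ℝ) (i : Fin n) : ℝ := ∑ j, u i j * x i j

/-- Utility of agent `j ∈ B`: `w j · x_j = Σ_i w j i * x i j`. -/
def utilB {n : ℕ} (w : Fin n → Fin n → ℝ) (x : Fin n → Fin n → ℝ) (j : Fin n) : ℝ :=
  ∑ i, w j i * x i j

/-- Two-sided envy-freeness: no agent on either side prefers the bundle of another
agent on their own side. -/
def EnvyFree2 {n : ℕ} (u w x : Fin n → Fin n → ℝ) : Prop :=
  (∀ i i' : Fin n, ∑ j, u i j * x i' j ≤ utilA u x i) ∧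
  (∀ j j' : Fin n, ∑ i, w j i * x i j' ≤ utilB w x j)

/-- Two-sided Pareto-optimality over fractional perfect matchings. -/
def ParetoOptimal2 {n : ℕ} (u w x : Fin n → Fin n → ℝ) : Prop :=
  ¬ ∃ y, isPM y ∧
    (∀ i, utilA u x i ≤ utilA u y i) ∧ (∀ j, utilB w x j ≤ utilB w y j) ∧
    ((∃ i, utilA u x i < utilA u y i) ∨ (∃ j, utilB w x j < utilB w y j))

/-- Asymmetric {0,1} utilities of side A over side B (A = {1,2,3} ↦ {0,1,2},
B = {4,5,6} ↦ {0,1,2}): agent 1 likes 4; agent 2 likes 5 and 6. -/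
def u13 : Fin 3 → Fin 3 → ℝ := ![![1, 0, 0], ![0, 1, 1], ![0, 0, 0]]

/-- Utilities of side B over side A: agent 4 likes 2. -/
def w13 : Fin 3 → Fin 3 → ℝ := ![![0, 1, 0], ![0, 0, 0], ![0, 0, 0]]

/-!
Envy-freeness pins down the market. Agent 1 envies anyone holding more of 4 than itself, and
agent 2 envies 3 unless 3 holds at least as much of 4 as 2 does, so `x₂₄ ≤ x₃₄ ≤ x₁₄`. Agent 4
values only agent 2 and so caps `x₂₅` and `x₂₆` by `x₂₄`, which forces `x₂₄ ≥ 1/3`. Since the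
column of 4 sums to 1, all three shares of 4 are `1/3`, and the utility profile is
`(1/3, 2/3, 0 | 1/3, 0, 0)`. Handing agent 3's share of 4 to agent 1 (and compensating 3 with 5
and 6, which it does not value) raises agent 1 to `2/3` and leaves everybody else unchanged.
-/

open Matrix

lemma utilA_u13 (x : Fin 3 → Fin 3 → ℝ) : utilA u13 x = ![x 0 0, x 1 1 + x 1 2, 0] := by
  ext i
  fin_cases i <;> simp [utilA, u13, Fin.sum_univ_three]

lemma utilB_w13 (x : Fin 3 → Fin 3 → ℝ) : utilB w13 x = ![x 1 0, 0, 0] := by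
  ext j
  fin_cases j <;> simp [utilB, w13, Fin.sum_univ_three]

lemma EnvyFree2.util_u13_w13_eq {x : Fin 3 → Fin 3 → ℝ} (hx : isPM x)
    (hef : EnvyFree2 u13 w13 x) : utilA u13 x = ![1/3, 2/3, 0] ∧ utilB w13 x = ![1/3, 0, 0] := by
  obtain ⟨_, hrow, hcol⟩ := hx
  obtain ⟨hefA, hefB⟩ := hef
  have hcol₄ : x 0 0 + x 1 0 + x 2 0 = 1 := by simpa [Fin.sum_univ_three] using hcol 0
  have hrow₂ : x 1 0 + x 1 1 + x 1 2 = 1 := by simpa [Fin.sum_univ_three] using hrow 1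
  have hrow₃ : x 2 0 + x 2 1 + x 2 2 = 1 := by simpa [Fin.sum_univ_three] using hrow 2
  have hef₁₂ : x 1 0 ≤ x 0 0 := by simpa [utilA, u13, Fin.sum_univ_three] using hefA 0 1
  have hef₁₃ : x 2 0 ≤ x 0 0 := by simpa [utilA, u13, Fin.sum_univ_three] using hefA 0 2
  have hef₂₃ : x 2 1 + x 2 2 ≤ x 1 1 + x 1 2 := by
    simpa [utilA, u13, Fin.sum_univ_three] using hefA 1 2
  have hef₄₅ : x 1 1 ≤ x 1 0 := by simpa [utilB, w13, Fin.sum_univ_three] using hefB 0 1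
  have hef₄₆ : x 1 2 ≤ x 1 0 := by simpa [utilB, w13, Fin.sum_univ_three] using hefB 0 2
  have hx₁₄ : x 0 0 = 1/3 := by linarith
  have hx₂₄ : x 1 0 = 1/3 := by linarith
  have hu₂ : x 1 1 + x 1 2 = 2/3 := by linarith
  rw [utilA_u13, utilB_w13, hx₁₄, hx₂₄, hu₂]
  exact ⟨rfl, rfl⟩

/-- The matching `y` of the paper, completed along edges of utility zero. -/
noncomputable def y13 : Fin 3 → Fin 3 → ℝ := ![![2/3, 1/6, 1/6], ![1/3, 1/3, 1/3], ![0, 1/2, 1/2]]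

lemma isPM_y13 : isPM y13 := by
  refine ⟨?_, ?_, ?_⟩
  · intro i j
    fin_cases i <;> fin_cases j <;> norm_num [y13]
  · intro i
    fin_cases i <;> norm_num [y13, Fin.sum_univ_three, cons_val_two]
  · intro j
    fin_cases j <;> norm_num [y13, Fin.sum_univ_three, cons_val_two]

lemma utilA_u13_y13 : utilA u13 y13 = ![2/3, 2/3, 0] := by
  rw [utilA_u13]
  norm_num [y13, cons_val_two]

lemma utilB_w13_y13 : utilB w13 y13 = ![1/3, 0, 0] := by
  rw [utilB_w13]
  simp [y13]

/-- in this asymmetric two-sided {0,1} instance, no fractional perfect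
matching is simultaneously envy-free and Pareto-optimal. -/
theorem no_efpo_asymmetric :
    ¬ ∃ x : Fin 3 → Fin 3 → ℝ, isPM x ∧ EnvyFree2 u13 w13 x ∧ ParetoOptimal2 u13 w13 x := by
  rintro ⟨x, hx, hef, hpo⟩
  obtain ⟨hA, hB⟩ := hef.util_u13_w13_eq hx
  refine hpo ⟨y13, isPM_y13, fun i ↦ ?_, fun j ↦ ?_, Or.inl ⟨0, ?_⟩⟩
  · rw [hA, utilA_u13_y13]
    fin_cases i <;> norm_num
  · rw [hB, utilB_w13_y13]
  · rw [hA, utilA_u13_y13]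
    norm_num
end
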